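/- arXiv:1204.5205 — 2 statements merged into one kernel-verified Lean document; each statement's English description precedes it below -/
import Mathlib

section
/- Let R be a commutative ring and σ a ring endomorphism of R such that R satisfies the condition (C_σ^1): for all a, b ∈ R, ab = 0 implies a·σ(b) = 0. Let M be an R-module satisfying the condition (C_σ^2): for all m ∈ M and a ∈ R, (σ(a)·a)·m = 0 implies σ(a)·m = 0. Then the Nagata extension R⊕_σM is a semicommutative ring. -/
/-!
If `(a, m) * (b, n) = 0` then `a * b = 0` and `σ a • n = -(b • m)`. Multiplying by `a` gives
`(σ a * a) • n = -((a * b) • m) = 0`, so `(C_σ^2)` kills `σ a • n` and hence also `b • m`: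
both summands of the second coordinate vanish separately. By `(C_σ^1)` also `b * σ a = 0`, and
the second coordinate of `(a, m) * (c, p) * (b, n)`, namely
`σ c • σ a • n + (b * σ a) • p + c • b • m`, vanishes term by term.
-/

/-- The Nagata extension `R ⊕_σ M` of a commutative ring `R` by an `R`-module `M` along a
ring endomorphism `σ` of `R`: the underlying additive group is `R × M`, with multiplication
`(a, m) * (b, n) = (a * b, σ a • n + b • m)`. -/
@[nolint unusedArguments]
def Nagata (R : Type*) [CommRing R] (σ : R →+* R) (M : Type*)
    [AddCommGroup M] [Module R M] : Type _ := R × M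

namespace Nagata

variable {R : Type*} [CommRing R] {σ : R →+* R} {M : Type*} [AddCommGroup M] [Module R M]

instance : AddCommGroup (Nagata R σ M) := inferInstanceAs (AddCommGroup (R × M))

/-- The element `(a, m)` of the Nagata extension. -/
def mk (a : R) (m : M) : Nagata R σ M := (a, m)

instance : Ring (Nagata R σ M) where
  __ := (inferInstance : AddCommGroup (Nagata R σ M))
  mul x y := (x.1 * y.1, σ x.1 • y.2 + y.1 • x.2)
  one := ((1 : R), (0 : M))
  left_distrib x y z := by
    refine Prod.ext ?_ ?_
    · show x.1 * (y.1 + z.1) = x.1 * y.1 + x.1 * z.1; ring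
    · show σ x.1 • (y.2 + z.2) + (y.1 + z.1) • x.2
          = (σ x.1 • y.2 + y.1 • x.2) + (σ x.1 • z.2 + z.1 • x.2)
      rw [smul_add, add_smul]; abel
  right_distrib x y z := by
    refine Prod.ext ?_ ?_
    · show (x.1 + y.1) * z.1 = x.1 * z.1 + y.1 * z.1; ring
    · show σ (x.1 + y.1) • z.2 + z.1 • (x.2 + y.2)
          = (σ x.1 • z.2 + z.1 • x.2) + (σ y.1 • z.2 + z.1 • y.2)
      rw [map_add, add_smul, smul_add]; abel
  zero_mul x := by
    refine Prod.ext ?_ ?_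
    · show (0 : R) * x.1 = 0; ring
    · show σ (0 : R) • x.2 + x.1 • (0 : M) = 0; simp
  mul_zero x := by
    refine Prod.ext ?_ ?_
    · show x.1 * (0 : R) = 0; ring
    · show σ x.1 • (0 : M) + (0 : R) • x.2 = 0; simp
  mul_assoc x y z := by
    refine Prod.ext ?_ ?_
    · show x.1 * y.1 * z.1 = x.1 * (y.1 * z.1); ring
    · show σ (x.1 * y.1) • z.2 + z.1 • (σ x.1 • y.2 + y.1 • x.2)
          = σ x.1 • (σ y.1 • z.2 + z.1 • y.2) + (y.1 * z.1) • x.2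
      rw [map_mul, mul_smul, smul_add, smul_add, mul_smul, smul_comm z.1 (σ x.1),
        smul_comm z.1 y.1]
      abel
  one_mul x := by
    refine Prod.ext ?_ ?_
    · show 1 * x.1 = x.1; ring
    · show σ 1 • x.2 + x.1 • (0 : M) = x.2; simp
  mul_one x := by
    refine Prod.ext ?_ ?_
    · show x.1 * 1 = x.1; ring
    · show σ x.1 • (0 : M) + (1 : R) • x.2 = x.2; simp

end Nagata

/-- A ring `S` is semicommutative if `a * b = 0` implies `a * r * b = 0` for every `r`. -/
def IsSemicommutativeRing (S : Type*) [Ring S] : Prop :=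
  ∀ a b : S, a * b = 0 → ∀ r : S, a * r * b = 0

namespace Nagata

variable {R : Type*} [CommRing R] {σ : R →+* R} {M : Type*} [AddCommGroup M] [Module R M]

theorem fst_mul (x y : Nagata R σ M) : (x * y).1 = x.1 * y.1 := rfl

theorem snd_mul (x y : Nagata R σ M) : (x * y).2 = σ x.1 • y.2 + y.1 • x.2 := rfl

theorem eq_zero_iff {x : Nagata R σ M} : x = 0 ↔ x.1 = 0 ∧ x.2 = 0 := Prod.ext_iff

theorem smul_snd_eq_zero_of_mul_eq_zero
    (hC2 : ∀ (m : M) (a : R), (σ a * a) • m = 0 → σ a • m = 0)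
    {x y : Nagata R σ M} (h : x * y = 0) : σ x.1 • y.2 = 0 ∧ y.1 • x.2 = 0 := by
  obtain ⟨hfst, hsnd⟩ := eq_zero_iff.1 h
  rw [fst_mul] at hfst
  rw [snd_mul, add_eq_zero_iff_eq_neg] at hsnd
  have hleft : σ x.1 • y.2 = 0 := by
    apply hC2
    rw [mul_comm, mul_smul, hsnd, smul_neg, smul_smul, hfst, zero_smul, neg_zero]
  exact ⟨hleft, by rwa [hleft, zero_eq_neg] at hsnd⟩

theorem mul_mul_eq_zero_of_mul_eq_zero
    (hC1 : ∀ a b : R, a * b = 0 → a * σ b = 0)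
    (hC2 : ∀ (m : M) (a : R), (σ a * a) • m = 0 → σ a • m = 0)
    {x y : Nagata R σ M} (h : x * y = 0) (r : Nagata R σ M) : x * r * y = 0 := by
  have hfst : x.1 * y.1 = 0 := fst_mul x y ▸ (eq_zero_iff.1 h).1
  have hyx : y.1 * σ x.1 = 0 := hC1 _ _ (by rw [mul_comm, hfst])
  obtain ⟨hleft, hright⟩ := smul_snd_eq_zero_of_mul_eq_zero hC2 h
  refine eq_zero_iff.2 ⟨?_, ?_⟩
  · rw [fst_mul, fst_mul, mul_right_comm, hfst, zero_mul]
  · rw [snd_mul, snd_mul, fst_mul, map_mul, mul_comm, mul_smul, hleft, smul_add, smul_smul, hyx,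
      smul_comm y.1 r.1, hright]
    simp

end Nagata

/-- If `R` is a commutative ring satisfying `(C_σ^1)` (`a * b = 0` implies `a * σ b = 0`)
and `M` is an `R`-module satisfying `(C_σ^2)` (`(σ a * a) • m = 0` implies `σ a • m = 0`),
then the Nagata extension `R ⊕_σ M` is a semicommutative ring. -/
theorem nagata_semicommutative_of_C1_C2
    (R : Type*) [CommRing R] (σ : R →+* R)
    (M : Type*) [AddCommGroup M] [Module R M]
    (hC1 : ∀ a b : R, a * b = 0 → a * σ b = 0)
    (hC2 : ∀ (m : M) (a : R), (σ a * a) • m = 0 → σ a • m = 0) :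
    IsSemicommutativeRing (Nagata R σ M) :=
  fun _ _ h r => Nagata.mul_mul_eq_zero_of_mul_eq_zero hC1 hC2 h r
end

section
/- Let R be a commutative domain, σ a ring endomorphism of R, and M an R-module. Then the Nagata extension R⊕_σM is a right McCoy ring. -/
/-- A ring `S` is right McCoy if whenever nonzero polynomials `f, g` over it satisfy
`f * g = 0`, there is a nonzero constant `c` with `f * C c = 0`. -/
def IsRightMcCoyRing (S : Type*) [Ring S] : Prop :=
  ∀ f g : Polynomial S, f ≠ 0 → g ≠ 0 → f * g = 0 →
    ∃ c : S, c ≠ 0 ∧ f * Polynomial.C c = 0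

open Polynomial

namespace Polynomial

variable {S : Type*}

lemma mul_eq_mul_map_of_coeff [Semiring S] {f g : S[X]} (φ : S →+* S)
    (h : ∀ i j, f.coeff i * g.coeff j = g.coeff j * φ (f.coeff i)) :
    f * g = g * f.map φ := by
  ext k
  rw [coeff_mul, coeff_mul]
  conv_lhs => rw [← Finset.HasAntidiagonal.map_swap_antidiagonal, Finset.sum_map]
  refine Finset.sum_congr rfl fun ij _ => ?_
  simp only [Function.Embedding.coeFn_mk, Prod.fst_swap, Prod.snd_swap, coeff_map]
  exact h ij.2 ij.1

lemma commute_C_of_forall_commute_coeff [Semiring S] {h : S[X]} {a : S}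
    (ha : ∀ i, Commute a (h.coeff i)) : Commute (C a) h :=
  Polynomial.ext fun i => by rw [coeff_C_mul, coeff_mul_C, (ha i).eq]

/-- McCoy's theorem, relativized to a two-sided ideal `I`. -/
theorem eq_zero_of_mul_eq_zero_of_commute [Ring S] (I : Ideal S) [I.IsTwoSided] {h : S[X]}
    (hcomm : ∀ i j, Commute (h.coeff i) (h.coeff j)) (hI : ∀ a ∈ I, C a * h = 0 → a = 0)
    (g : S[X]) (hg : ∀ n, g.coeff n ∈ I) (hgh : g * h = 0) : g = 0 := by
  suffices hgC : ∀ i, g * C (h.coeff i) = 0 by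
    rw [← leadingCoeff_eq_zero]
    refine hI _ (hg _) (ext fun i => ?_)
    simpa [coeff_mul_C] using congr(coeff $(hgC i) g.natDegree)
  apply Nat.strong_decreasing_induction
  · exact ⟨h.natDegree, fun i hi => by rw [coeff_eq_zero_of_natDegree_lt hi, C_0, mul_zero]⟩
  intro l IH
  -- `g * C h_l` again kills `h`: either its degree is smaller, or its leading coefficient
  -- `g_m * h_l` is the coefficient of `X ^ (m + l)` in `g * h`.
  obtain hlt | heq := (natDegree_mul_C_le g (h.coeff l)).lt_or_eq
  · refine eq_zero_of_mul_eq_zero_of_commute I hcomm hI _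
      (fun n => coeff_mul_C g n _ ▸ I.mul_mem_right _ (hg n)) ?_
    rw [mul_assoc, (commute_C_of_forall_commute_coeff (hcomm l)).eq, ← mul_assoc, hgh, zero_mul]
  rw [← leadingCoeff_eq_zero, leadingCoeff, heq, coeff_mul_C]
  have hcoeff := congr(coeff $hgh (g.natDegree + l))
  rw [coeff_zero, coeff_mul, Finset.sum_eq_single (g.natDegree, l)] at hcoeff
  · exact hcoeff
  · rintro ⟨i, j⟩ hij hne
    rw [Finset.HasAntidiagonal.mem_antidiagonal] at hij
    obtain hi | rfl | hi := lt_trichotomy i g.natDegree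
    · simpa [coeff_mul_C] using congr(coeff $(IH j (by lia)) i)
    · exact absurd (by rw [show j = l by lia]) hne
    · rw [coeff_eq_zero_of_natDegree_lt hi, zero_mul]
  · simp
termination_by g.natDegree

end Polynomial

namespace Nagata

variable {R : Type*} [CommRing R] {σ : R →+* R} {M : Type*} [AddCommGroup M] [Module R M]

def fstHom : Nagata R σ M →+* R where
  toFun x := x.1
  map_one' := rfl
  map_mul' _ _ := rfl
  map_zero' := rfl
  map_add' _ _ := rfl

def inl : R →+* Nagata R σ M where
  toFun a := ((a : R), (0 : M))
  map_one' := rfl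
  map_mul' a b := Prod.ext rfl (show (0 : M) = σ a • 0 + b • 0 by simp)
  map_zero' := rfl
  map_add' a b := Prod.ext rfl (show (0 : M) = 0 + 0 by simp)

lemma mul_eq_zero_of_fst_eq_zero {x y : Nagata R σ M} (hx : x.1 = 0) (hy : y.1 = 0) :
    x * y = 0 :=
  Prod.ext (show x.1 * y.1 = 0 by simp [hx])
    (show σ x.1 • y.2 + y.1 • x.2 = 0 by simp [hx, hy])

lemma mul_eq_mul_inl_of_fst_eq_zero (x : Nagata R σ M) {y : Nagata R σ M} (hy : y.1 = 0) :
    x * y = y * inl (σ x.1) :=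
  Prod.ext (show x.1 * y.1 = y.1 * σ x.1 by simp [hy])
    (show σ x.1 • y.2 + y.1 • x.2 = σ y.1 • (0 : M) + σ x.1 • y.2 by simp [hy])

def twist : Nagata R σ M →+* Nagata R σ M := inl.comp (σ.comp fstHom)

lemma mul_eq_mul_map_twist (f : (Nagata R σ M)[X]) {g : (Nagata R σ M)[X]}
    (hg : ∀ j, (g.coeff j).1 = 0) : f * g = g * f.map twist :=
  mul_eq_mul_map_of_coeff twist fun _ j => mul_eq_mul_inl_of_fst_eq_zero _ (hg j)

lemma mul_C_eq_C_mul_map_twist (f : (Nagata R σ M)[X]) {a : Nagata R σ M} (ha : a.1 = 0) :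
    f * C a = C a * f.map twist := by
  ext k
  rw [coeff_mul_C, coeff_C_mul, coeff_map]
  exact mul_eq_mul_inl_of_fst_eq_zero _ ha

lemma commute_coeff_map_twist (f : (Nagata R σ M)[X]) (i j : ℕ) :
    Commute ((f.map twist).coeff i) ((f.map twist).coeff j) := by
  simp only [coeff_map, twist, RingHom.comp_apply]
  exact (Commute.all _ _).map inl

lemma fst_coeff_eq_zero_of_map_fstHom_eq_zero {f : (Nagata R σ M)[X]} (hf : f.map fstHom = 0)
    (i : ℕ) : (f.coeff i).1 = 0 := by
  have hfi := congr(coeff $hf i)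
  rw [coeff_map, coeff_zero] at hfi
  exact hfi

end Nagata

/-- If `R` is a commutative domain and `M` any `R`-module, then the Nagata extension
`R ⊕_σ M` is a right McCoy ring. -/
theorem nagata_rightMcCoy_of_isDomain
    (R : Type*) [CommRing R] [IsDomain R] (σ : R →+* R)
    (M : Type*) [AddCommGroup M] [Module R M] :
    IsRightMcCoyRing (Nagata R σ M) := by
  intro f g hf hg hfg
  have hFG : f.map Nagata.fstHom * g.map Nagata.fstHom = 0 := by
    rw [← Polynomial.map_mul, hfg, Polynomial.map_zero]
  rcases mul_eq_zero.1 hFG with hF | hG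
  · have hf₁ := Nagata.fst_coeff_eq_zero_of_map_fstHom_eq_zero hF
    refine ⟨f.leadingCoeff, leadingCoeff_ne_zero.2 hf, ext fun i => ?_⟩
    rw [coeff_mul_C, coeff_zero]
    exact Nagata.mul_eq_zero_of_fst_eq_zero (hf₁ i) (hf₁ _)
  · have hg₁ := Nagata.fst_coeff_eq_zero_of_map_fstHom_eq_zero hG
    by_contra! hno
    refine hg (eq_zero_of_mul_eq_zero_of_commute (RingHom.ker Nagata.fstHom)
      (Nagata.commute_coeff_map_twist f) (fun a ha hfa => ?_) g hg₁ ?_)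
    · by_contra ha₀
      exact hno a ha₀ (by rw [Nagata.mul_C_eq_C_mul_map_twist f ha, hfa])
    · rw [← Nagata.mul_eq_mul_map_twist f hg₁, hfg]
end
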